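/- The phase-point operators satisfy the periodicity relation Â(q + σ_q·N, p + σ_p·N) = Â(q,p)·(-1)^{σ_p·q + σ_q·p + σ_q·σ_p·N} for σ_q, σ_p ∈ {0,1}. -/

import Mathlib

open Complex Matrix BigOperators

/-- Cyclic shift `Û|n⟩ = |n+1⟩`. -/
def Uhat (N : ℕ) : Matrix (ZMod N) (ZMod N) ℂ :=
  fun k l => if k = l + 1 then 1 else 0

/-- Diagonal phase `V̂|n⟩ = e^{2πin/N}|n⟩`. -/
noncomputable def Vhat (N : ℕ) : Matrix (ZMod N) (ZMod N) ℂ :=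
  fun k l => if k = l then Complex.exp (2 * Real.pi * Complex.I * (k.val : ℂ) / N) else 0

/-- Reflection `R̂|n⟩ = |-n⟩`. -/
def Rhat (N : ℕ) : Matrix (ZMod N) (ZMod N) ℂ :=
  fun k l => if k = -l then 1 else 0

/-- Phase-point operator `Â(q,p) = (1/(2N)) Û^q R̂ V̂^{-p} e^{iπpq/N}`. -/
noncomputable def Ahat (N : ℕ) [NeZero N] (q p : ℤ) : Matrix (ZMod N) (ZMod N) ℂ :=
  (Complex.exp (Real.pi * Complex.I * (p : ℂ) * (q : ℂ) / N) / (2 * N)) •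
    ((Uhat N) ^ q * Rhat N * (Vhat N) ^ (-p))

/-- Auxiliary: shift-by-`c` matrix. -/
def shiftM (N : ℕ) (c : ZMod N) : Matrix (ZMod N) (ZMod N) ℂ :=
  fun k l => if k = l + c then 1 else 0

lemma shift_mul (N : ℕ) [NeZero N] (a b : ZMod N) : shiftM N a * shiftM N b = shiftM N (b + a) := by
  funext k l
  simp only [shiftM, Matrix.mul_apply, ite_mul, one_mul, zero_mul]
  have key : ∀ x : ZMod N, (k = x + a) ↔ (x = k - a) := fun x => by
    constructor
    · intro h; rw [h]; ring
    · intro h; rw [h]; ring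
  simp_rw [key]
  rw [Finset.sum_ite_eq' Finset.univ (k - a)]
  simp only [Finset.mem_univ, if_true]
  have : (k - a = l + b) ↔ (k = l + (b + a)) := by
    constructor
    · intro h; rw [sub_eq_iff_eq_add] at h; rw [h]; ring
    · intro h; rw [sub_eq_iff_eq_add, h]; ring
  simp [this]

lemma Uhat_pow (N : ℕ) [NeZero N] (n : ℕ) : (Uhat N) ^ n = shiftM N n := by
  induction n with
  | zero => funext k l; simp [shiftM, Matrix.one_apply, eq_comm]
  | succ n ih =>
    have hU : Uhat N = shiftM N 1 := rfl
    rw [pow_succ, ih, hU, shift_mul]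
    push_cast
    rw [add_comm]

lemma Uhat_pow_N (N : ℕ) [NeZero N] : (Uhat N) ^ N = 1 := by
  rw [Uhat_pow]
  funext k l
  simp [shiftM, Matrix.one_apply, ZMod.natCast_self, eq_comm]

lemma Vhat_diag (N : ℕ) : Vhat N = Matrix.diagonal (fun k : ZMod N => Complex.exp (2 * Real.pi * Complex.I * (k.val : ℂ) / N)) := by
  funext k l
  by_cases h : k = l <;> simp [Vhat, Matrix.diagonal, h, Matrix.of_apply]

lemma Vhat_pow_N (N : ℕ) [NeZero N] : (Vhat N) ^ N = 1 := by
  rw [Vhat_diag, Matrix.diagonal_pow]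
  have hN : (N : ℂ) ≠ 0 := Nat.cast_ne_zero.2 (NeZero.ne N)
  have hfun : (fun k : ZMod N => Complex.exp (2 * Real.pi * Complex.I * (k.val : ℂ) / N)) ^ N = fun _ => 1 := by
    funext m
    rw [Pi.pow_apply, ← Complex.exp_nat_mul,
      show (N : ℂ) * (2 * Real.pi * Complex.I * (m.val : ℂ) / N) = (m.val : ℂ) * (2 * Real.pi * Complex.I) by field_simp]
    exact Complex.exp_nat_mul_two_pi_mul_I m.val
  rw [hfun, Matrix.diagonal_one]

theorem Ahat_periodicity (N : ℕ) [NeZero N] (q p : ℕ) (hq : q < 2 * N) (hp : p < 2 * N)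
    (σq σp : ℕ) (hσq : σq ≤ 1) (hσp : σp ≤ 1) :
    Ahat N ((q : ℤ) + σq * N) ((p : ℤ) + σp * N) =
      ((-1 : ℂ) ^ (σp * q + σq * p + σq * σp * N)) • Ahat N q p := by
  have hNne : N ≠ 0 := NeZero.ne N
  have hN : (N : ℂ) ≠ 0 := Nat.cast_ne_zero.2 hNne
  have hUdet : IsUnit (Uhat N).det :=
    IsUnit.of_pow_eq_one (n := N) (by rw [← Matrix.det_pow, Uhat_pow_N, Matrix.det_one]) hNne
  have hVdet : IsUnit (Vhat N).det :=
    IsUnit.of_pow_eq_one (n := N) (by rw [← Matrix.det_pow, Vhat_pow_N, Matrix.det_one]) hNne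
  have hUzN : (Uhat N) ^ (N : ℤ) = 1 := by rw [zpow_natCast, Uhat_pow_N]
  have hVzN : (Vhat N) ^ (N : ℤ) = 1 := by rw [zpow_natCast, Vhat_pow_N]
  have hU : (Uhat N) ^ ((q : ℤ) + σq * N) = (Uhat N) ^ (q : ℤ) := by
    rw [Matrix.zpow_add hUdet, Matrix.zpow_mul' _ hUdet, hUzN, Matrix.one_zpow, mul_one]
  have h1 : (Vhat N) ^ (-((σp : ℤ) * N)) = 1 := by
    rw [Matrix.zpow_neg hVdet, Matrix.zpow_mul' _ hVdet, hVzN, Matrix.one_zpow, inv_one]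
  have hV : (Vhat N) ^ (-((p : ℤ) + σp * N)) = (Vhat N) ^ (-(p : ℤ)) := by
    rw [neg_add, Matrix.zpow_add hVdet, h1, mul_one]
  have hsc : (Real.pi : ℂ) * Complex.I * (((p : ℤ) + σp * N : ℤ) : ℂ) * (((q : ℤ) + σq * N : ℤ) : ℂ) / N
      = (Real.pi : ℂ) * Complex.I * (((p : ℕ) : ℤ) : ℂ) * (((q : ℕ) : ℤ) : ℂ) / N
        + ((σp * q + σq * p + σq * σp * N : ℕ) : ℂ) * ((Real.pi : ℂ) * Complex.I) := by
    push_cast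
    field_simp
    ring
  unfold Ahat
  rw [hU, hV, hsc, Complex.exp_add, Complex.exp_nat_mul, Complex.exp_pi_mul_I, smul_smul]
  congr 1
  ring
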